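/- Let X be a projective variety over an algebraically closed field on which every 1-cycle is rationally equivalent to an integral linear combination of lines, and suppose the Fano scheme of lines F(X) is connected and rationally chain connected (so any two lines on X are algebraically equivalent). Then the Griffiths group Griff_1(X) of 1-cycles homologically trivial modulo algebraic equivalence is trivial, and CH_1(X)/alg ≅ Z generated by the class of a line. -/

import Mathlib

/-!
Since each line differs from `ℓ₀` by an algebraically trivial class and lines generate `A`,
every class is `m • ℓ₀` modulo `B`. If such a class is homologically trivial, then so is
`m • cl ℓ₀`; as `cl ℓ₀` has degree one it has infinite order, so `m = 0` and the class lies in `B`.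
-/

namespace AddSubgroup

variable {A : Type*} [AddCommGroup A] {B : AddSubgroup A} {s₀ : A}

theorem sup_zmultiples_eq_top_of_closure_eq_top {S : Set A} (hgen : closure S = ⊤)
    (hS : ∀ s ∈ S, s - s₀ ∈ B) : B ⊔ zmultiples s₀ = ⊤ := by
  refine top_le_iff.mp (hgen ▸ (closure_le _).mpr fun s hs => ?_)
  rw [← sub_add_cancel s s₀]
  exact add_mem (mem_sup_left (hS s hs)) (mem_sup_right (mem_zmultiples s₀))

theorem exists_sub_zsmul_mem_of_sup_zmultiples_eq_top (htop : B ⊔ zmultiples s₀ = ⊤) (a : A) :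
    ∃ m : ℤ, a - m • s₀ ∈ B := by
  obtain ⟨b, hb, _, ⟨m, rfl⟩, hab⟩ := mem_sup.mp (htop ▸ mem_top a : a ∈ B ⊔ zmultiples s₀)
  exact ⟨m, by simpa [← hab] using hb⟩

theorem ker_le_of_sup_zmultiples_eq_top {H : Type*} [AddCommGroup H]
    (htop : B ⊔ zmultiples s₀ = ⊤) {f : A →+ H} (hB : B ≤ f.ker)
    (hs₀ : ¬IsOfFinAddOrder (f s₀)) : f.ker ≤ B := by
  intro a ha
  obtain ⟨m, hm⟩ := exists_sub_zsmul_mem_of_sup_zmultiples_eq_top htop a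
  have hm_smul : m • f s₀ = 0 := by
    simpa [AddMonoidHom.mem_ker.mp ha] using AddMonoidHom.mem_ker.mp (hB hm)
  have hm_zero : m = 0 := by
    by_contra hm_ne
    exact hs₀ (isOfFinAddOrder_iff_zsmul_eq_zero.mpr ⟨m, hm_ne, hm_smul⟩)
  simpa [hm_zero] using hm

end AddSubgroup

theorem not_isOfFinAddOrder_of_map_eq_one {H : Type*} [AddMonoid H] (deg : H →+ ℤ) {x : H}
    (hx : deg x = 1) : ¬IsOfFinAddOrder x := fun hfin => by
  simpa [hx] using (deg.isOfFinAddOrder hfin).eq_zero'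

theorem griffiths_trivial_of_generated_by_lines
    (A : Type*) [AddCommGroup A]
    (Lines : Set A) (ℓ₀ : A) (hℓ₀ : ℓ₀ ∈ Lines)
    (hgen : AddSubgroup.closure Lines = (⊤ : AddSubgroup A))
    (B : AddSubgroup A)
    (halg : ∀ l ∈ Lines, ∀ l' ∈ Lines, l - l' ∈ B)
    (H : Type*) [AddCommGroup H]
    (cl : A →+ H) (hB : ∀ b ∈ B, cl b = 0)
    (degH : H →+ ℤ) (hdeg : ∀ l ∈ Lines, degH (cl l) = 1) :
    (∀ a : A, ∃ m : ℤ, a - m • ℓ₀ ∈ B) ∧ (∀ a : A, cl a = 0 → a ∈ B) := by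
  have htop : B ⊔ AddSubgroup.zmultiples ℓ₀ = ⊤ :=
    AddSubgroup.sup_zmultiples_eq_top_of_closure_eq_top hgen fun l hl => halg l hl ℓ₀ hℓ₀
  have hker : cl.ker ≤ B :=
    AddSubgroup.ker_le_of_sup_zmultiples_eq_top htop hB
      (not_isOfFinAddOrder_of_map_eq_one degH (hdeg ℓ₀ hℓ₀))
  exact ⟨AddSubgroup.exists_sub_zsmul_mem_of_sup_zmultiples_eq_top htop, fun a ha => hker ha⟩
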